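/- Let I = {I_m} be a filtration of a Noetherian ring R and \overline{I} = {\overline{I_m}} the filtration of integral closures of each ideal I_m. Then ν̄_I = ν̄_{\overline{I}}. -/

import Mathlib

open Filter Topology Polynomial
open scoped ENNReal

/-- A filtration `I = {I_m}` of ideals of `R`: `I_0 = R`, `I_{n+1} ⊆ I_n`,
and `I_m · I_n ⊆ I_{m+n}`. -/
structure RingFiltration (R : Type*) [CommRing R] where
  I : ℕ → Ideal R
  top_eq : I 0 = ⊤
  antitone_succ : ∀ n, I (n + 1) ≤ I n
  mul_le : ∀ m n, I m * I n ≤ I (m + n)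

namespace RingFiltration
variable {R : Type*} [CommRing R] (F : RingFiltration R)

/-- The order function `ν_I(f) = sup {m : f ∈ I_m}`, viewed in `[0,∞]`. -/
noncomputable def nu (f : R) : ℝ≥0∞ :=
  sSup ((fun m : ℕ => (m : ℝ≥0∞)) '' {m | f ∈ F.I m})

/-- The asymptotic Samuel function `ν̄_I(f) = lim_n ν_I(f^n)/n` (the limit exists and
equals the limsup used here to define it). -/
noncomputable def nubar (f : R) : ℝ≥0∞ :=
  Filter.limsup (fun n : ℕ => F.nu (f ^ n) / (n : ℝ≥0∞)) Filter.atTop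

end RingFiltration

/-- The integral closure of an ideal `J`: the set of `x` satisfying an equation
`x^n + a_1 x^{n-1} + ⋯ + a_n = 0` with `a_i ∈ J^i`. -/
def Ideal.intCl {R : Type*} [CommRing R] (J : Ideal R) : Set R :=
  {x | ∃ n : ℕ, 0 < n ∧ ∃ a : ℕ → R, (∀ i ∈ Finset.Icc 1 n, a i ∈ J ^ i) ∧
    x ^ n + ∑ i ∈ Finset.Icc 1 n, a i * x ^ (n - i) = 0}

/-
If `x` satisfies `x^n + a_1 x^{n-1} + ⋯ + a_n = 0` with `a_i ∈ I_m^i`, then rewriting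
`x^t = -∑ a_i x^{t-i}` shows inductively that `x^t ∈ I_m^(t-n+1)` for all `t`. Applied to `x^N ∈ \bar{I_m}` this puts `x^(N(n-1+k))` in `I_m^k ⊆ I_{mk}`, so
`ν̄_I(x) ≥ lim_k mk / (N(n-1+k)) = m / N`. Taking the supremum over `m` with `x^N ∈ \bar{I_m}`
gives `ν̄_I(x) ≥ ν_{\bar{I}}(x^N) / N`, hence `ν̄_I ≥ ν̄_{\bar{I}}`; the other inequality holds
because `I_m ⊆ \bar{I_m}`.
-/

namespace Ideal

variable {R : Type*} [CommRing R] (J : Ideal R)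

lemma subset_intCl : (J : Set R) ⊆ J.intCl := by
  intro x hx
  refine ⟨1, one_pos, fun _ => -x, ?_, by simp⟩
  intro i hi
  obtain rfl : i = 1 := by simpa using hi
  simpa using J.neg_mem hx

lemma exists_pow_mem_pow_sub_of_mem_intCl {x : R} (hx : x ∈ J.intCl) :
    ∃ d : ℕ, ∀ t : ℕ, x ^ t ∈ J ^ (t - d) := by
  obtain ⟨n, hn, a, ha, heq⟩ := hx
  refine ⟨n - 1, fun t => ?_⟩
  induction t using Nat.strong_induction_on with
  | _ t ih =>
    rcases lt_or_ge t n with htn | hnt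
    · simp [show t - (n - 1) = 0 by omega]
    have hxt : x ^ t = -∑ i ∈ Finset.Icc 1 n, a i * x ^ (t - i) := by
      rw [← pow_sub_mul_pow x hnt, eq_neg_of_add_eq_zero_left heq, mul_neg, Finset.mul_sum]
      refine congrArg _ (Finset.sum_congr rfl fun i hi => ?_)
      have hin : i ≤ n := (Finset.mem_Icc.mp hi).2
      rw [mul_left_comm, ← pow_add, Nat.sub_add_sub_cancel hnt hin]
    rw [hxt]
    refine neg_mem (Ideal.sum_mem _ fun i hi => ?_)
    obtain ⟨hi1, hin⟩ := Finset.mem_Icc.mp hi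
    refine Ideal.pow_le_pow_right (show t - (n - 1) ≤ i + (t - i - (n - 1)) by omega) ?_
    rw [pow_add]
    exact mul_mem_mul (ha i hi) (ih (t - i) (by omega))

end Ideal

lemma ENNReal.tendsto_mul_div_mul_add_atTop (m N d : ℕ) (hN : N ≠ 0) :
    Tendsto (fun k : ℕ => (m * k : ℝ≥0∞) / (N * (d + k))) atTop (𝓝 ((m : ℝ≥0∞) / N)) := by
  have hN' : (N : NNReal) ≠ 0 := by exact_mod_cast hN
  have h := ENNReal.tendsto_coe.mpr
    (tendsto_add_mul_div_add_mul_atTop_nhds (0 : NNReal) (N * d) m hN')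
  rw [ENNReal.coe_div hN'] at h
  refine h.congr' ((eventually_ne_atTop 0).mono fun k hk => ?_)
  rw [ENNReal.coe_div (by positivity)]
  push_cast
  ring_nf

namespace RingFiltration

variable {R : Type*} [CommRing R] (F : RingFiltration R)

lemma pow_le (m k : ℕ) : F.I m ^ k ≤ F.I (m * k) := by
  induction k with
  | zero => simp [F.top_eq]
  | succ k ih =>
    calc F.I m ^ (k + 1) = F.I m ^ k * F.I m := pow_succ _ _
    _ ≤ F.I (m * k) * F.I m := Ideal.mul_mono_left ih
    _ ≤ F.I (m * (k + 1)) := F.mul_le _ _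

lemma natCast_le_nu {f : R} {m : ℕ} (h : f ∈ F.I m) : (m : ℝ≥0∞) ≤ F.nu f :=
  le_sSup ⟨m, h, rfl⟩

lemma nubar_mono {F G : RingFiltration R} (h : ∀ m, F.I m ≤ G.I m) (x : R) :
    F.nubar x ≤ G.nubar x :=
  limsup_le_limsup (Eventually.of_forall fun _ =>
    ENNReal.div_le_div_right (sSup_le_sSup (Set.image_mono fun m hm => h m hm)) _)

lemma natCast_div_le_nubar {x : R} {m N d : ℕ} (hN : N ≠ 0)
    (h : ∀ k, x ^ (N * (d + k)) ∈ F.I (m * k)) : (m : ℝ≥0∞) / N ≤ F.nubar x := by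
  have hindex : Tendsto (fun k : ℕ => N * (d + k)) atTop atTop :=
    tendsto_atTop_mono (fun k => (Nat.le_add_left k d).trans
      (Nat.le_mul_of_pos_left _ (Nat.pos_of_ne_zero hN))) tendsto_id
  calc (m : ℝ≥0∞) / N
      = limsup (fun k : ℕ => (m * k : ℝ≥0∞) / (N * (d + k))) atTop :=
        (ENNReal.tendsto_mul_div_mul_add_atTop m N d hN).limsup_eq.symm
    _ ≤ limsup (fun k : ℕ => F.nu (x ^ (N * (d + k))) / ((N * (d + k) : ℕ) : ℝ≥0∞)) atTop :=
        limsup_le_limsup (Eventually.of_forall fun k => by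
          simpa using ENNReal.div_le_div_right (F.natCast_le_nu (h k)) _)
    _ ≤ F.nubar x := hindex.limsup_comp_le_limsup (u := fun M : ℕ => F.nu (x ^ M) / (M : ℝ≥0∞))

lemma nu_pow_div_le_nubar {F G : RingFiltration R}
    (hG : ∀ m, (G.I m : Set R) ⊆ (F.I m).intCl) (x : R) {N : ℕ} (hN : N ≠ 0) :
    G.nu (x ^ N) / N ≤ F.nubar x := by
  rw [ENNReal.div_le_iff (by exact_mod_cast hN) (ENNReal.natCast_ne_top N)]
  refine sSup_le ?_
  rintro _ ⟨m, hm, rfl⟩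
  obtain ⟨d, hd⟩ := (F.I m).exists_pow_mem_pow_sub_of_mem_intCl (hG m hm)
  refine (ENNReal.div_le_iff (by exact_mod_cast hN) (ENNReal.natCast_ne_top N)).mp
    (F.natCast_div_le_nubar (d := d) hN fun k => ?_)
  rw [pow_mul]
  exact F.pow_le m k (by simpa using hd (d + k))

end RingFiltration

theorem nubar_eq_nubar_bar_general {R : Type*} [CommRing R]
    (F G : RingFiltration R)
    (hG : ∀ m, (G.I m : Set R) = Ideal.intCl (F.I m)) (x : R) :
    F.nubar x = G.nubar x := by
  have hFG : ∀ m, F.I m ≤ G.I m := fun m y hy => by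
    rw [← SetLike.mem_coe, hG m]
    exact (F.I m).subset_intCl hy
  refine le_antisymm (RingFiltration.nubar_mono hFG x) ?_
  exact limsup_le_of_le (by isBoundedDefault) <| (eventually_ne_atTop 0).mono fun N hN =>
    RingFiltration.nu_pow_div_le_nubar (fun m => (hG m).le) x hN

/-- Let `I = {I_m}` be a filtration of a Noetherian ring `R` and `\bar{I} = {\bar{I_m}}`
the filtration of integral closures of each `I_m`.  Then `ν̄_I = ν̄_{\bar{I}}`. -/
theorem nubar_eq_nubar_bar {R : Type*} [CommRing R] [IsNoetherianRing R]
    (F G : RingFiltration R)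
    (hG : ∀ m, (G.I m : Set R) = Ideal.intCl (F.I m)) (x : R) :
    F.nubar x = G.nubar x :=
  nubar_eq_nubar_bar_general F G hG x
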